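/- Let Y be a finite set, q a full-support probability distribution on Y, u : Y → ℝ, λ > 0 and μ < 1/λ, with κ = 1/λ − μ > 0. Then the minimum value v(λ,μ) = min over p ∈ Δ(Y) of [Σ_y u(y)p(y) + (1/λ)KL(p‖q) + μH(p)] satisfies the closed-form identity v(λ,μ) = −κ·log( Σ_y exp(−u(y)/κ)·q(y)^β ), where β = 1/(1−λμ). -/
import Mathlib


open Finset Real

/-- Shannon entropy (natural log). -/
noncomputable def shannonEntropy {Y : Type*} [Fintype Y] (p : Y → ℝ) : ℝ :=
  -∑ y, p y * Real.log (p y)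

/-- Relative entropy (Kullback–Leibler divergence), natural log. -/
noncomputable def klDiv {Y : Type*} [Fintype Y] (p q : Y → ℝ) : ℝ :=
  ∑ y, p y * Real.log (p y / q y)

/-- Gibbs' inequality. -/
lemma gibbs_aux {Y : Type*} [Fintype Y] (p r : Y → ℝ)
    (hp : ∀ y, 0 ≤ p y) (hr : ∀ y, 0 < r y)
    (hp1 : ∑ y, p y = 1) (hr1 : ∑ y, r y = 1) :
    0 ≤ ∑ y, p y * Real.log (p y / r y) := by
  have key : ∀ y, p y - r y ≤ p y * Real.log (p y / r y) := by
    intro y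
    rcases eq_or_lt_of_le (hp y) with h | h
    · simp [← h]
      linarith [(hr y).le]
    · have hlog : Real.log (r y / p y) ≤ r y / p y - 1 :=
        Real.log_le_sub_one_of_pos (div_pos (hr y) h)
      have hlneg : Real.log (p y / r y) = -Real.log (r y / p y) := by
        rw [← Real.log_inv]; congr 1; field_simp
      rw [hlneg]
      have h2 := mul_le_mul_of_nonneg_left hlog h.le
      have hne : p y ≠ 0 := ne_of_gt h
      nlinarith [mul_div_cancel₀ (r y) hne]
  calc (0:ℝ) = ∑ y, (p y - r y) := by rw [Finset.sum_sub_distrib, hp1, hr1]; ring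
    _ ≤ _ := Finset.sum_le_sum fun y _ => key y

/-- Closed-form identity for the minimum value of the complexity-augmented
robust criterion: `v(λ,μ) = −κ log( Σ_y exp(−u(y)/κ) q(y)^β )`. -/
theorem stmt1 {Y : Type*} [Fintype Y] [Nonempty Y]
    (q : Y → ℝ) (hq : ∀ y, 0 < q y) (hq1 : ∑ y, q y = 1)
    (u : Y → ℝ) (lam mu : ℝ) (hlam : 0 < lam) (hmu : mu < 1 / lam)
    (kappa beta : ℝ) (hk : kappa = 1 / lam - mu) (hb : beta = 1 / (1 - lam * mu)) :
    IsLeast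
      {v : ℝ | ∃ p : Y → ℝ, (∀ y, 0 ≤ p y) ∧ (∑ y, p y = 1) ∧
        v = (∑ y, u y * p y) + (1 / lam) * klDiv p q + mu * shannonEntropy p}
      (-kappa * Real.log (∑ y, Real.exp (-(u y) / kappa) * q y ^ beta)) := by
  have hkpos : 0 < kappa := by rw [hk]; linarith
  have hkne : kappa ≠ 0 := ne_of_gt hkpos
  have hlne : lam ≠ 0 := ne_of_gt hlam
  have h1lm : 0 < 1 - lam * mu := by
    have h2 := mul_lt_mul_of_pos_left hmu hlam
    rw [mul_one_div, div_self hlne] at h2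
    linarith
  have hkb : kappa * beta = 1 / lam := by
    rw [hk, hb]; field_simp
  set w : Y → ℝ := fun y => Real.exp (-(u y) / kappa) * q y ^ beta with hw
  have hwpos : ∀ y, 0 < w y := fun y =>
    mul_pos (Real.exp_pos _) (Real.rpow_pos_of_pos (hq y) _)
  set Z : ℝ := ∑ y, w y with hZ
  have hZpos : 0 < Z := Finset.sum_pos (fun y _ => hwpos y) Finset.univ_nonempty
  have hlogw : ∀ y, Real.log (w y) = -(u y) / kappa + beta * Real.log (q y) := by
    intro y
    rw [hw]
    rw [Real.log_mul (Real.exp_ne_zero _) (ne_of_gt (Real.rpow_pos_of_pos (hq y) _)),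
      Real.log_exp, Real.log_rpow (hq y)]
  set r : Y → ℝ := fun y => w y / Z with hr
  have hrpos : ∀ y, 0 < r y := fun y => div_pos (hwpos y) hZpos
  have hr1 : ∑ y, r y = 1 := by
    rw [hr]; simp only; rw [← Finset.sum_div]; exact div_self (ne_of_gt hZpos)
  -- key identity
  have key : ∀ p : Y → ℝ, (∀ y, 0 ≤ p y) → (∑ y, p y = 1) →
      (∑ y, u y * p y) + (1 / lam) * klDiv p q + mu * shannonEntropy p
      = kappa * (∑ y, p y * Real.log (p y / r y)) - kappa * Real.log Z := by
    intro p hp hp1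
    have pointwise : ∀ y, u y * p y + (1 / lam) * (p y * Real.log (p y / q y))
        - mu * (p y * Real.log (p y))
        = kappa * (p y * Real.log (p y / r y)) - kappa * Real.log Z * p y := by
      intro y
      rcases eq_or_lt_of_le (hp y) with h | h
      · simp [← h]
      · have hpne : p y ≠ 0 := ne_of_gt h
        have e1 : Real.log (p y / r y) = Real.log (p y) - Real.log (w y) + Real.log Z := by
          rw [hr]
          rw [Real.log_div hpne (ne_of_gt (hrpos y)),
            Real.log_div (ne_of_gt (hwpos y)) (ne_of_gt hZpos)]
          ring
        have hdiv : kappa * (-(u y) / kappa) = -(u y) := mul_div_cancel₀ _ hkne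
        rw [e1, hlogw y, Real.log_div hpne (ne_of_gt (hq y))]
        linear_combination -(p y * Real.log (p y)) * hk + (p y * Real.log (q y)) * hkb
          + p y * hdiv
    have L : (∑ y, u y * p y) + (1 / lam) * klDiv p q + mu * shannonEntropy p
        = ∑ y, (u y * p y + (1 / lam) * (p y * Real.log (p y / q y))
            - mu * (p y * Real.log (p y))) := by
      unfold klDiv shannonEntropy
      rw [Finset.sum_sub_distrib, Finset.sum_add_distrib, ← Finset.mul_sum, ← Finset.mul_sum]
      ring
    have R : kappa * (∑ y, p y * Real.log (p y / r y)) - kappa * Real.log Z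
        = ∑ y, (kappa * (p y * Real.log (p y / r y)) - kappa * Real.log Z * p y) := by
      rw [Finset.sum_sub_distrib, ← Finset.mul_sum, ← Finset.mul_sum, hp1, mul_one]
    rw [L, R]
    exact Finset.sum_congr rfl fun y _ => pointwise y
  constructor
  · refine ⟨r, fun y => (hrpos y).le, hr1, ?_⟩
    rw [key r (fun y => (hrpos y).le) hr1]
    have : ∀ y, r y * Real.log (r y / r y) = 0 := by
      intro y
      rw [div_self (ne_of_gt (hrpos y)), Real.log_one, mul_zero]
    rw [Finset.sum_congr rfl fun y _ => this y]
    simp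
  · rintro v ⟨p, hp, hp1, rfl⟩
    rw [key p hp hp1]
    have hg := gibbs_aux p r hp hrpos hp1 hr1
    nlinarith
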